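/- Let U ≥ 1 be a number of event types, let t : Fin N → ℝ be a strictly increasing sequence of event times with associated marks u : Fin N → Fin U. Suppose (Assumption 1) for every mark v there exists B_v > 0 such that a past event j contributes to the excitation sum at a later event i only if t_i − t_j ≤ B_{u_j}; and (Assumption 2) for every mark v there is a constant C_v ∈ ℕ such that every half-open real interval of length max_w B_w contains at most C_v events of mark v. Then there exists Q ∈ ℕ (one may take Q = Σ_{v=1}^U C_v) such that for every index i, every contributing index j (that is, every j < i with t_i − t_j ≤ B_{u_j}) satisfies i − j ≤ Q; in particular, the set of contributing past events at any event i has cardinality at most Q and is contained among the last Q events preceding i. -/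

import Mathlib

open Finset

/-!
If `j` contributes at `i`, then `t i - t j ≤ B (u j) ≤ max_w B w`, so by monotonicity of `t`
every event `k` with `j ≤ k < i` occurs in the window `[t j, t j + max_w B w)`. Sorting these
events by mark, Assumption 2 bounds their number, which is `i - j`, by `∑ v, C v`. Hence all
contributing events lie among the last `∑ v, C v` indices before `i`.
-/

theorem Finset.card_le_sum_of_card_filter_le {ι κ : Type*} [Fintype κ] [DecidableEq κ]
    (s : Finset ι) (f : ι → κ) (C : κ → ℕ) (h : ∀ v, #{k ∈ s | f k = v} ≤ C v) :
    #s ≤ ∑ v, C v := by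
  rw [card_eq_sum_card_fiberwise fun k _ => mem_univ (f k)]
  exact sum_le_sum fun v _ => h v

theorem card_Ico_le_sum_of_window_card_le {ι κ : Type*} [PartialOrder ι] [LocallyFiniteOrder ι]
    [Fintype ι] [Fintype κ] [DecidableEq κ] {t : ι → ℝ} (ht : StrictMono t) (u : ι → κ)
    {L : ℝ} {C : κ → ℕ}
    (hC : ∀ (v : κ) (a : ℝ), #{k | u k = v ∧ t k ∈ Set.Ico a (a + L)} ≤ C v)
    {i j : ι} (hij : t i ≤ t j + L) :
    #(Finset.Ico j i) ≤ ∑ v, C v := by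
  refine card_le_sum_of_card_filter_le _ u C fun v => (card_le_card ?_).trans (hC v (t j))
  intro k hk
  simp only [mem_filter, mem_Ico] at hk
  have hwindow : t k ∈ Set.Ico (t j) (t i) := ht.mapsTo_Ico (Set.mem_Ico.2 hk.1)
  simp only [mem_filter, mem_univ, true_and]
  exact ⟨hk.2, hwindow.1, hwindow.2.trans_le hij⟩

theorem Fin.card_filter_lt_le_of_sub_le {N : ℕ} (i : Fin N) (p : Fin N → Prop) [DecidablePred p]
    {Q : ℕ} (h : ∀ j < i, p j → (i : ℕ) - j ≤ Q) :
    #{j | j < i ∧ p j} ≤ Q := by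
  calc #{j | j < i ∧ p j} ≤ #(Finset.Ico ((i : ℕ) - Q) i) := by
        refine card_le_card_of_injOn Fin.val (fun j hj => ?_) Fin.val_injective.injOn
        simp only [coe_filter, mem_univ, true_and, Set.mem_ofPred_eq] at hj
        have hgap := h j hj.1 hj.2
        have hji : (j : ℕ) < i := hj.1
        simp only [coe_Ico, Set.mem_Ico]
        omega
    _ ≤ Q := by rw [Nat.card_Ico]; omega

theorem cutoff_last_Q_events_general
    (U N : ℕ) (hU : 1 ≤ U)
    (t : Fin N → ℝ) (ht : StrictMono t)
    (u : Fin N → Fin U)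
    (B : Fin U → ℝ)
    (maxB : ℝ)
    (hmaxB : maxB = Finset.univ.sup' ⟨⟨0, hU⟩, Finset.mem_univ _⟩ B)
    (C : Fin U → ℕ)
    (hC : ∀ (v : Fin U) (a : ℝ),
      (Finset.univ.filter
        (fun j : Fin N => u j = v ∧ t j ∈ Set.Ico a (a + maxB))).card ≤ C v) :
    ∃ Q : ℕ, Q = ∑ v : Fin U, C v ∧
      (∀ i j : Fin N, j < i → t i - t j ≤ B (u j) → (i : ℕ) - (j : ℕ) ≤ Q) ∧
      (∀ i : Fin N,
        (Finset.univ.filter (fun j : Fin N => j < i ∧ t i - t j ≤ B (u j))).card ≤ Q) := by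
  have hgap : ∀ i j : Fin N, j < i → t i - t j ≤ B (u j) →
      (i : ℕ) - (j : ℕ) ≤ ∑ v, C v := by
    intro i j _ hcontrib
    have hBmax : B (u j) ≤ maxB := hmaxB ▸ le_sup' B (mem_univ (u j))
    rw [← Fin.card_Ico]
    exact card_Ico_le_sum_of_window_card_le ht u hC (by linarith)
  exact ⟨_, rfl, hgap, fun i => Fin.card_filter_lt_le_of_sub_le i _ (hgap i)⟩

/-- **Theorem 1 (cut-off theorem).** Given strictly increasing event times `t` with marks `u`,
if (Assumption 1) a past event `j` contributes to the excitation sum at a later event `i`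
only when `t i - t j ≤ B (u j)` for mark-specific bounds `B v > 0`, and (Assumption 2)
every half-open interval of length `max_w B w` contains at most `C v` events of mark `v`,
then there exists `Q ∈ ℕ` (one may take `Q = ∑ v, C v`) such that every contributing index
`j` at any event `i` satisfies `i - j ≤ Q`; in particular the set of contributing past
events at `i` has cardinality at most `Q`. -/
theorem cutoff_last_Q_events
    (U N : ℕ) (hU : 1 ≤ U)
    (t : Fin N → ℝ) (ht : StrictMono t)
    (u : Fin N → Fin U)
    (B : Fin U → ℝ) (hB : ∀ v, 0 < B v)
    (maxB : ℝ)
    (hmaxB : maxB = Finset.univ.sup' ⟨⟨0, hU⟩, Finset.mem_univ _⟩ B)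
    (C : Fin U → ℕ)
    (hC : ∀ (v : Fin U) (a : ℝ),
      (Finset.univ.filter
        (fun j : Fin N => u j = v ∧ t j ∈ Set.Ico a (a + maxB))).card ≤ C v) :
    ∃ Q : ℕ, Q = ∑ v : Fin U, C v ∧
      (∀ i j : Fin N, j < i → t i - t j ≤ B (u j) → (i : ℕ) - (j : ℕ) ≤ Q) ∧
      (∀ i : Fin N,
        (Finset.univ.filter (fun j : Fin N => j < i ∧ t i - t j ≤ B (u j))).card ≤ Q) :=
  cutoff_last_Q_events_general U N hU t ht u B maxB hmaxB C hC
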